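/- Let K ≥ N ≥ 1 be natural numbers and let X be an antisymmetric N-th order tensor of dimension K over ℂ. Then rank_cp(X) ≤ binom(K, N) · rank_cp(E), where E is the determinant tensor of order N and dimension N. -/

import Mathlib

open scoped BigOperators

/-- The CP (canonical polyadic) rank of an `N`-th order tensor of dimension `K` over `ℂ`:
the least `p` such that the tensor is a sum of `p` elementary tensor products. -/
noncomputable def cpRank {N K : ℕ} (X : (Fin N → Fin K) → ℂ) : ℕ :=
  sInf {p : ℕ | ∃ x : Fin p → Fin N → Fin K → ℂ,
    ∀ k : Fin N → Fin K, X k = ∑ i, ∏ j, x i j (k j)}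

/-- An `N`-th order tensor is antisymmetric if it changes sign under any permutation
of its indices according to the sign of the permutation. -/
def IsAntisymTensor {N K : ℕ} (X : (Fin N → Fin K) → ℂ) : Prop :=
  ∀ (π : Equiv.Perm (Fin N)) (k : Fin N → Fin K),
    X (k ∘ π) = ((Equiv.Perm.sign π : ℤ) : ℂ) * X k

/-- The determinant tensor: `E ℓ = sgn ℓ` if `ℓ` is a permutation of `Fin N`, `0` otherwise. -/
noncomputable def detTensor (N : ℕ) : (Fin N → Fin N) → ℂ :=
  fun ℓ => ∑ π : Equiv.Perm (Fin N),
    if ℓ = ⇑π then ((Equiv.Perm.sign π : ℤ) : ℂ) else 0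

/-- The basis antisymmetric tensor associated with `u : Fin N → Fin K`:
`E_u ℓ = sgn π` if `ℓ = u ∘ π` for a (necessarily unique, when `u` is injective)
permutation `π` of `Fin N`, and `0` otherwise. -/
noncomputable def basisTensor {N K : ℕ} (u : Fin N → Fin K) : (Fin N → Fin K) → ℂ :=
  fun ℓ => ∑ π : Equiv.Perm (Fin N),
    if ℓ = u ∘ ⇑π then ((Equiv.Perm.sign π : ℤ) : ℂ) else 0

/-- A function on `N`-tuples is antisymmetric if it changes sign under any permutation
of its arguments according to the sign of the permutation. -/
def IsAntisymFun {N : ℕ} {Ω : Type*} (f : (Fin N → Ω) → ℂ) : Prop :=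
  ∀ (π : Equiv.Perm (Fin N)) (r : Fin N → Ω),
    f (r ∘ π) = ((Equiv.Perm.sign π : ℤ) : ℂ) * f r

/-!
An antisymmetric tensor vanishes at every index tuple with a repeated entry and is determined by
its values at the increasing tuples `u_s`, one for each `N`-subset `s` of `Fin K`; hence
`X = ∑ₛ X(u_s) • E_{u_s}`, a sum of `binom(K, N)` terms. Each basis tensor `E_u` is the
determinant tensor transported along the embedding `u` and extended by zero, so a CP
decomposition of `E` into `p` terms transports to one of `E_u` into `p` terms.
-/

section HasCPDecomp

variable {ι κ κ' R : Type*} [Fintype ι] [CommSemiring R]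

def HasCPDecomp (X : (ι → κ) → R) (p : ℕ) : Prop :=
  ∃ x : Fin p → ι → κ → R, ∀ k, X k = ∑ i, ∏ j, x i j (k j)

theorem hasCPDecomp_zero : HasCPDecomp (0 : (ι → κ) → R) 0 :=
  ⟨Fin.elim0, fun k => by simp⟩

theorem HasCPDecomp.add {X Y : (ι → κ) → R} {p q : ℕ} (hX : HasCPDecomp X p)
    (hY : HasCPDecomp Y q) : HasCPDecomp (X + Y) (p + q) := by
  obtain ⟨x, hx⟩ := hX
  obtain ⟨y, hy⟩ := hY
  exact ⟨Fin.append x y, fun k => by simp [Fin.sum_univ_add, hx k, hy k]⟩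

theorem HasCPDecomp.finset_sum {α : Type*} (s : Finset α) {X : α → (ι → κ) → R} {p : ℕ}
    (h : ∀ a ∈ s, HasCPDecomp (X a) p) : HasCPDecomp (∑ a ∈ s, X a) (s.card * p) := by
  classical
  induction s using Finset.induction_on with
  | empty => simpa using hasCPDecomp_zero
  | insert a s ha ih =>
    rw [Finset.sum_insert ha, Finset.card_insert_of_notMem ha, add_one_mul, add_comm (s.card * p)]
    exact (h a (s.mem_insert_self a)).add (ih fun b hb => h b (Finset.mem_insert_of_mem hb))

theorem HasCPDecomp.smul [Nonempty ι] {X : (ι → κ) → R} {p : ℕ} (c : R)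
    (h : HasCPDecomp X p) : HasCPDecomp (c • X) p := by
  classical
  obtain ⟨x, hx⟩ := h
  let j₀ : ι := Classical.arbitrary ι
  refine ⟨fun i j t => (if j = j₀ then c else 1) * x i j t, fun k => ?_⟩
  simp only [Pi.smul_apply, smul_eq_mul, hx k, Finset.mul_sum, Finset.prod_mul_distrib,
    Finset.prod_ite_eq', Finset.mem_univ, if_true]

theorem hasCPDecomp_single_one [DecidableEq κ] (k : ι → κ) :
    HasCPDecomp (Pi.single k 1 : (ι → κ) → R) 1 :=
  ⟨fun _ j t => if t = k j then 1 else 0, fun l => by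
    simp [Pi.single_apply, Finset.prod_boole, funext_iff]⟩

theorem exists_hasCPDecomp [Nonempty ι] [Fintype κ] (X : (ι → κ) → R) :
    ∃ p, HasCPDecomp X p := by
  classical
  refine ⟨Fintype.card (ι → κ) * 1, ?_⟩
  have hX : X = ∑ k, X k • Pi.single k 1 := by
    simpa [← Pi.single_smul] using (Finset.univ_sum_single X).symm
  rw [hX]
  exact HasCPDecomp.finset_sum _ fun k _ => (hasCPDecomp_single_one k).smul (X k)

theorem HasCPDecomp.of_comp {X : (ι → κ) → R} {Y : (ι → κ') → R} {p : ℕ} {u : κ → κ'}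
    (h : HasCPDecomp X p) (hYu : ∀ m, Y (u ∘ m) = X m)
    (hY : ∀ l j, l j ∉ Set.range u → Y l = 0) : HasCPDecomp Y p := by
  classical
  obtain ⟨x, hx⟩ := h
  refine ⟨fun i j t => if ht : t ∈ Set.range u then x i j ht.choose else 0, fun l => ?_⟩
  by_cases hl : ∀ j, l j ∈ Set.range u
  · let m j := (hl j).choose
    have hm : u ∘ m = l := funext fun j => (hl j).choose_spec
    calc Y l = X m := by rw [← hm, hYu]
      _ = _ := hx m
      _ = _ := Finset.sum_congr rfl fun i _ => Finset.prod_congr rfl fun j _ =>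
        by dsimp only; rw [dif_pos (hl j)]
  · push Not at hl
    obtain ⟨j, hj⟩ := hl
    rw [hY l j hj]
    exact (Finset.sum_eq_zero fun i _ =>
      Finset.prod_eq_zero (Finset.mem_univ j) (dif_neg hj)).symm

end HasCPDecomp

theorem cpRank_le_of_hasCPDecomp {N K p : ℕ} {X : (Fin N → Fin K) → ℂ} (h : HasCPDecomp X p) :
    cpRank X ≤ p :=
  Nat.sInf_le h

theorem hasCPDecomp_cpRank {N K : ℕ} [NeZero N] (X : (Fin N → Fin K) → ℂ) :
    HasCPDecomp X (cpRank X) :=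
  Nat.sInf_mem (exists_hasCPDecomp X)

theorem Function.Injective.exists_perm_eq_comp {α β : Type*} {u l : α → β}
    (hu : Function.Injective u) (hl : Function.Injective l) (h : Set.range l = Set.range u) :
    ∃ π : Equiv.Perm α, l = u ∘ π :=
  ⟨(Equiv.ofInjective l hl).trans ((Equiv.setCongr h).trans (Equiv.ofInjective u hu).symm),
    funext fun a => by simp [Equiv.apply_ofInjective_symm]⟩

section BasisTensor

variable {N K : ℕ}

theorem detTensor_perm (π : Equiv.Perm (Fin N)) :
    detTensor N π = ((Equiv.Perm.sign π : ℤ) : ℂ) := by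
  simp [detTensor, DFunLike.coe_fn_eq]

theorem basisTensor_comp {u : Fin N → Fin K} (hu : Function.Injective u) (m : Fin N → Fin N) :
    basisTensor u (u ∘ m) = detTensor N m := by
  simp only [basisTensor, detTensor, hu.comp_left.eq_iff]

theorem exists_perm_of_basisTensor_ne_zero {u l : Fin N → Fin K} (h : basisTensor u l ≠ 0) :
    ∃ π : Equiv.Perm (Fin N), l = u ∘ π := by
  by_contra! h'
  exact h (Finset.sum_eq_zero fun π _ => if_neg (h' π))

theorem HasCPDecomp.basisTensor {u : Fin N → Fin K} {p : ℕ} (hu : Function.Injective u)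
    (h : HasCPDecomp (detTensor N) p) : HasCPDecomp (basisTensor u) p :=
  h.of_comp (basisTensor_comp hu) fun l j hj => by
    by_contra hne
    obtain ⟨π, rfl⟩ := exists_perm_of_basisTensor_ne_zero hne
    exact hj ⟨π j, rfl⟩

theorem IsAntisymTensor.apply_eq_zero_of_not_injective {X : (Fin N → Fin K) → ℂ}
    (hX : IsAntisymTensor X) {l : Fin N → Fin K} (hl : ¬Function.Injective l) : X l = 0 := by
  obtain ⟨a, b, hab, hne⟩ := Function.not_injective_iff.mp hl
  have hswap : l ∘ Equiv.swap a b = l := by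
    funext j
    simp only [Function.comp_apply, Equiv.swap_apply_def]
    split_ifs <;> simp_all
  have h := hX (Equiv.swap a b) l
  rw [hswap, Equiv.Perm.sign_swap hne] at h
  push_cast at h
  linear_combination h / 2

theorem IsAntisymTensor.eq_sum_basisTensor {X : (Fin N → Fin K) → ℂ} (hX : IsAntisymTensor X) :
    X = ∑ s : {s : Finset (Fin K) // s.card = N},
      X (s.1.orderEmbOfFin s.2) • basisTensor (s.1.orderEmbOfFin s.2) := by
  funext l
  rw [Finset.sum_apply]
  by_cases hl : Function.Injective l
  · let s : {s : Finset (Fin K) // s.card = N} :=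
      ⟨Finset.univ.image l, by simp [Finset.card_image_of_injective _ hl]⟩
    obtain ⟨π, hπ⟩ := (s.1.orderEmbOfFin s.2).injective.exists_perm_eq_comp hl (by simp [s])
    rw [Finset.sum_eq_single s]
    · rw [Pi.smul_apply, hπ, basisTensor_comp (s.1.orderEmbOfFin s.2).injective, detTensor_perm,
        hX, smul_eq_mul, mul_comm]
    · intro t _ hts
      rw [Pi.smul_apply]
      refine smul_eq_zero_of_right _ (not_not.mp fun hne => hts ?_)
      obtain ⟨σ, hσ⟩ := exists_perm_of_basisTensor_ne_zero hne
      refine Subtype.ext (Finset.coe_injective ?_)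
      rw [← Finset.range_orderEmbOfFin t.1 t.2, ← EquivLike.range_comp _ σ, ← hσ]
      simp [s]
    · simp
  · rw [hX.apply_eq_zero_of_not_injective hl]
    refine (Finset.sum_eq_zero fun t _ => ?_).symm
    rw [Pi.smul_apply]
    refine smul_eq_zero_of_right _ ?_
    by_contra hne
    obtain ⟨σ, rfl⟩ := exists_perm_of_basisTensor_ne_zero hne
    exact hl ((t.1.orderEmbOfFin t.2).injective.comp σ.injective)

end BasisTensor

theorem cpRank_antisym_le_choose_mul_cpRank_detTensor_general {N K : ℕ} (hN : 1 ≤ N)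
    (X : (Fin N → Fin K) → ℂ) (hX : IsAntisymTensor X) :
    cpRank X ≤ K.choose N * cpRank (detTensor N) := by
  have : NeZero N := ⟨by omega⟩
  have hE := hasCPDecomp_cpRank (detTensor N)
  have hX' : HasCPDecomp X
      (Fintype.card {s : Finset (Fin K) // s.card = N} * cpRank (detTensor N)) := by
    rw [hX.eq_sum_basisTensor]
    exact HasCPDecomp.finset_sum _ fun s _ =>
      (hE.basisTensor (s.1.orderEmbOfFin s.2).injective).smul _
  simpa [Fintype.card_finset_len] using cpRank_le_of_hasCPDecomp hX'

theorem cpRank_antisym_le_choose_mul_cpRank_detTensor {N K : ℕ} (hN : 1 ≤ N) (hKN : N ≤ K)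
    (X : (Fin N → Fin K) → ℂ) (hX : IsAntisymTensor X) :
    cpRank X ≤ K.choose N * cpRank (detTensor N) :=
  cpRank_antisym_le_choose_mul_cpRank_detTensor_general hN X hX
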